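/- arXiv:1501.06095 — 2 statements merged into one kernel-verified Lean document; each statement's English description precedes it below -/
import Mathlib

section
/- Let the density on R^d be pdf(y) ∝ exp(−(ε/Δ)·‖y‖_∞) with ε, Δ > 0. Then for any x, x' ∈ R^d with ‖x − x'‖_∞ ≤ Δ and any measurable S ⊆ R^d, Pr_{Y}[x + Y ∈ S] ≤ e^{ε}·Pr_{Y}[x' + Y ∈ S]. -/
open MeasureTheory

/-- The exponential mechanism with the `L∞` norm: adding noise with density
proportional to `exp(-(ε/Δ)‖y‖_∞)` is `ε`-differentially private with respect
to shifts of `L∞` distance at most `Δ`. Here `Fin d → ℝ` carries the sup norm. -/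
theorem linf_exponential_mechanism_privacy (d : ℕ) (ε Δ : ℝ) (hε : 0 < ε) (hΔ : 0 < Δ) :
    let ν : Measure (Fin d → ℝ) :=
      volume.withDensity (fun y => ENNReal.ofReal (Real.exp (-(ε / Δ) * ‖y‖)))
    let μ : Measure (Fin d → ℝ) := (ν Set.univ)⁻¹ • ν
    ∀ x x' : Fin d → ℝ, ‖x - x'‖ ≤ Δ →
      ∀ S : Set (Fin d → ℝ), MeasurableSet S →
        μ {y | x + y ∈ S} ≤ ENNReal.ofReal (Real.exp ε) * μ {y | x' + y ∈ S} := by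
  intro ν μ x x' hxx' S hS
  set f : (Fin d → ℝ) → ENNReal := fun y => ENNReal.ofReal (Real.exp (-(ε / Δ) * ‖y‖)) with hf
  have hfm : Measurable f := by
    apply ENNReal.measurable_ofReal.comp
    exact (Real.measurable_exp.comp (measurable_const.mul measurable_norm))
  set v : Fin d → ℝ := x - x' with hv
  set B := {y | x' + y ∈ S} with hBdef
  have hB : MeasurableSet B := (measurable_const_add x') hS
  have hA : {y | x + y ∈ S} = (fun y => y + v)⁻¹' B := by
    ext y
    have hxy : x' + (y + v) = x + y := by rw [hv]; abel
    simp only [Set.mem_preimage, Set.mem_setOf_eq, hBdef, hxy]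
  have hmap : Measure.map (fun y => y + v) (volume : Measure (Fin d → ℝ)) = volume :=
    map_add_right_eq_self _ v
  have hcv : ν {y | x + y ∈ S} = ∫⁻ z in B, f (z - v) ∂volume := by
    have h1 : ν {y | x + y ∈ S} = ∫⁻ y in (fun y => y + v)⁻¹' B, f y ∂volume := by
      rw [hA]; exact withDensity_apply f ((measurable_add_const v) hB)
    have h2 := setLIntegral_map (μ := (volume : Measure (Fin d → ℝ)))
      (f := fun z => f (z - v)) (g := fun y => y + v) hB
      (hfm.comp (measurable_sub_const v)) (measurable_add_const v)
    rw [hmap] at h2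
    rw [h1, h2]
    congr 1
    ext y
    simp
  have hνB : ν B = ∫⁻ z in B, f z ∂volume := withDensity_apply f hB
  have hpt : ∀ z, f (z - v) ≤ ENNReal.ofReal (Real.exp ε) * f z := by
    intro z
    rw [hf]
    simp only []
    rw [← ENNReal.ofReal_mul (Real.exp_pos ε).le, ← Real.exp_add]
    apply ENNReal.ofReal_le_ofReal
    apply Real.exp_le_exp.mpr
    have h1 : ‖z‖ - ‖z - v‖ ≤ ‖v‖ := by
      have := norm_sub_norm_le z (z - v)
      simpa using this
    have h2 : ‖v‖ ≤ Δ := hxx'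
    have hεΔ : 0 < ε / Δ := div_pos hε hΔ
    have h3 : (ε / Δ) * (‖z‖ - ‖z - v‖) ≤ (ε / Δ) * Δ :=
      mul_le_mul_of_nonneg_left (h1.trans h2) hεΔ.le
    rw [div_mul_cancel₀ _ hΔ.ne'] at h3
    nlinarith
  have hν : ν {y | x + y ∈ S} ≤ ENNReal.ofReal (Real.exp ε) * ν B := by
    rw [hcv, hνB, ← lintegral_const_mul _ hfm]
    exact setLIntegral_mono (hfm.const_mul _) fun z _ => hpt z
  calc μ {y | x + y ∈ S} = (ν Set.univ)⁻¹ * ν {y | x + y ∈ S} := rfl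
    _ ≤ (ν Set.univ)⁻¹ * (ENNReal.ofReal (Real.exp ε) * ν B) := mul_le_mul_right hν _
    _ = ENNReal.ofReal (Real.exp ε) * ((ν Set.univ)⁻¹ * ν B) := by ring
    _ = ENNReal.ofReal (Real.exp ε) * μ B := rfl
end

section
/- If R is distributed as a gamma random variable with shape d+1 and rate ε/Δ, and conditioned on R, Y is uniform on the cube [−R, R]^d, then Y has density on R^d proportional to exp(−(ε/Δ)‖y‖_∞). -/
/-!
The factor `t^d` of the gamma density `r^(d+1) t^d e^(-rt) / d!` cancels the normalisation of the
uniform density `(2t)^(-d) 1{‖y‖∞ ≤ t}`, so by Tonelli the mixture has density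
`r^(d+1) / (d! 2^d) ∫_{‖y‖∞}^∞ e^(-rt) dt = r^d / (d! 2^d) e^(-r‖y‖∞)`.
The gamma law lives on `t > 0`, where the uniform laws are probability measures, so the mixture is
a probability measure and hence the normalisation of `e^(-r‖y‖∞) dy`.
-/

open MeasureTheory ProbabilityTheory Set
open scoped ENNReal

namespace MeasureTheory.Measure

variable {α β : Type*} [MeasurableSpace α] [MeasurableSpace β]

theorem bind_withDensity (μ : Measure α) (ν : Measure β) [SFinite μ] [SFinite ν]
    {f : α → β → ℝ≥0∞} (hf : Measurable (Function.uncurry f)) :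
    μ.bind (fun a => ν.withDensity (f a)) = ν.withDensity (fun b => ∫⁻ a, f a b ∂μ) := by
  ext s hs
  rw [bind_apply hs (measurable_withDensity hf).aemeasurable, withDensity_apply _ hs]
  simp_rw [withDensity_apply _ hs]
  exact lintegral_lintegral_swap hf.aemeasurable

theorem eq_inv_measure_univ_smul {μ ν : Measure α} [IsProbabilityMeasure μ] {c : ℝ≥0∞}
    (h : μ = c • ν) : μ = (ν univ)⁻¹ • ν := by
  have hc : c * ν univ = 1 := by
    rw [← smul_eq_mul, ← smul_apply, ← h, measure_univ]
  rwa [← ENNReal.eq_inv_of_mul_eq_one_left hc]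

end MeasureTheory.Measure

theorem ProbabilityTheory.cond_eq_withDensity {α : Type*} [MeasurableSpace α] (μ : Measure α)
    {s : Set α} (hs : MeasurableSet s) :
    μ[|s] = μ.withDensity (s.indicator fun _ => (μ s)⁻¹) := by
  rw [withDensity_indicator hs, withDensity_const]
  rfl

theorem lintegral_Ioi_exp_neg_mul {r : ℝ} (hr : 0 < r) (s : ℝ) :
    ∫⁻ t in Ioi s, ENNReal.ofReal (Real.exp (-r * t))
      = ENNReal.ofReal (Real.exp (-r * s) / r) := by
  rw [← ofReal_integral_eq_lintegral_ofReal (integrableOn_exp_mul_Ioi (neg_lt_zero.2 hr) s)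
    (Filter.Eventually.of_forall fun t => (Real.exp_pos _).le),
    integral_exp_mul_Ioi (neg_lt_zero.2 hr), neg_div_neg_eq]

namespace ProbabilityTheory

theorem gammaPDF_natCast_add_one (n : ℕ) (r : ℝ) {t : ℝ} (ht : 0 ≤ t) :
    gammaPDF (n + 1) r t
      = ENNReal.ofReal (r ^ (n + 1) * t ^ n * Real.exp (-(r * t)) / n.factorial) := by
  rw [gammaPDF_of_nonneg ht, add_sub_cancel_right, Real.Gamma_nat_eq_factorial,
    ← Nat.cast_add_one, Real.rpow_natCast, Real.rpow_natCast]
  congr 1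
  ring

theorem measurable_gammaPDF (a r : ℝ) : Measurable (gammaPDF a r) :=
  (measurable_gammaPDFReal a r).ennreal_ofReal

theorem ae_pos_gammaMeasure (a r : ℝ) : ∀ᵐ t ∂gammaMeasure a r, 0 < t := by
  rw [gammaMeasure, ae_withDensity_iff (measurable_gammaPDF a r)]
  filter_upwards [Measure.ae_ne volume 0] with t ht hpdf
  by_contra! hle
  exact hpdf (gammaPDF_of_neg (lt_of_le_of_ne hle ht))

end ProbabilityTheory

section Cube

variable {ι : Type*} [Fintype ι]

theorem setOf_forall_abs_le_eq_closedBall {t : ℝ} (ht : 0 ≤ t) :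
    {y : ι → ℝ | ∀ j, |y j| ≤ t} = Metric.closedBall 0 t := by
  ext y
  simp [pi_norm_le_iff_of_nonneg ht]

theorem volume_setOf_forall_abs_le {t : ℝ} (ht : 0 ≤ t) :
    volume {y : ι → ℝ | ∀ j, |y j| ≤ t} = ENNReal.ofReal ((2 * t) ^ Fintype.card ι) := by
  rw [setOf_forall_abs_le_eq_closedBall ht, Real.volume_pi_closedBall 0 ht]

theorem measurableSet_setOf_forall_abs_le_prod :
    MeasurableSet {p : ℝ × (ι → ℝ) | ∀ j, |p.2 j| ≤ p.1} := by
  simp_rw [ofPred_forall]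
  exact MeasurableSet.iInter fun j => measurableSet_le (by fun_prop) measurable_fst

theorem measurableSet_setOf_forall_abs_le (t : ℝ) :
    MeasurableSet {y : ι → ℝ | ∀ j, |y j| ≤ t} := by
  simp_rw [ofPred_forall]
  exact MeasurableSet.iInter fun j => measurableSet_le (by fun_prop) measurable_const

variable (ι) in
noncomputable def uniformCubePDF (t : ℝ) (y : ι → ℝ) : ℝ≥0∞ :=
  {y : ι → ℝ | ∀ j, |y j| ≤ t}.indicator (fun _ => (volume {y : ι → ℝ | ∀ j, |y j| ≤ t})⁻¹) y

theorem measurable_uniformCubePDF : Measurable (Function.uncurry (uniformCubePDF ι)) := by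
  have hvol : Monotone fun t : ℝ => volume {y : ι → ℝ | ∀ j, |y j| ≤ t} :=
    fun t t' htt' => measure_mono fun y hy j => (hy j).trans htt'
  exact (hvol.measurable.inv.comp measurable_fst).indicator measurableSet_setOf_forall_abs_le_prod

theorem cond_setOf_forall_abs_le_eq_withDensity (t : ℝ) :
    volume[|{y : ι → ℝ | ∀ j, |y j| ≤ t}] = volume.withDensity (uniformCubePDF ι t) :=
  cond_eq_withDensity volume (measurableSet_setOf_forall_abs_le t)

theorem bind_cond_setOf_forall_abs_le (μ : Measure ℝ) [SFinite μ] :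
    μ.bind (fun t => volume[|{y : ι → ℝ | ∀ j, |y j| ≤ t}])
      = volume.withDensity fun y => ∫⁻ t, uniformCubePDF ι t y ∂μ := by
  simp_rw [cond_setOf_forall_abs_le_eq_withDensity]
  exact Measure.bind_withDensity μ volume measurable_uniformCubePDF

theorem isProbabilityMeasure_bind_cond_setOf_forall_abs_le (μ : Measure ℝ)
    [IsProbabilityMeasure μ] (hμ : ∀ᵐ t ∂μ, 0 < t) :
    IsProbabilityMeasure (μ.bind fun t => volume[|{y : ι → ℝ | ∀ j, |y j| ≤ t}]) := by
  have hκ : Measurable fun t : ℝ => volume[|{y : ι → ℝ | ∀ j, |y j| ≤ t}] := by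
    simp_rw [cond_setOf_forall_abs_le_eq_withDensity]
    exact measurable_withDensity measurable_uniformCubePDF
  constructor
  rw [Measure.bind_apply MeasurableSet.univ hκ.aemeasurable, ← measure_univ (μ := μ),
    ← lintegral_one]
  refine lintegral_congr_ae (hμ.mono fun t ht => ?_)
  have hvol := volume_setOf_forall_abs_le (ι := ι) ht.le
  have : IsProbabilityMeasure volume[|{y : ι → ℝ | ∀ j, |y j| ≤ t}] :=
    cond_isProbabilityMeasure_of_finite (by rw [hvol]; positivity) (by simp [hvol])
  exact measure_univ

/-- At `t = 0` the cube is null and `0 * ∞ = 0` breaks the identity at `y = 0`. -/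
theorem gammaPDF_mul_uniformCubePDF (r : ℝ) {t : ℝ} (ht : t ≠ 0) (y : ι → ℝ) :
    gammaPDF (Fintype.card ι + 1) r t * uniformCubePDF ι t y
      = (Ici ‖y‖).indicator (fun t => ENNReal.ofReal (r ^ (Fintype.card ι + 1)
          / ((Fintype.card ι).factorial * 2 ^ Fintype.card ι) * Real.exp (-r * t))) t := by
  rcases ht.lt_or_gt with ht | ht
  · rw [gammaPDF_of_neg ht, zero_mul, indicator_of_notMem]
    exact not_le.2 (ht.trans_le (norm_nonneg y))
  unfold uniformCubePDF
  rw [setOf_forall_abs_le_eq_closedBall ht.le, Real.volume_pi_closedBall 0 ht.le]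
  by_cases hy : ‖y‖ ≤ t
  · rw [indicator_of_mem (mem_closedBall_zero_iff.2 hy), indicator_of_mem (mem_Ici.2 hy),
      gammaPDF_natCast_add_one _ _ ht.le, ← ENNReal.ofReal_inv_of_pos (by positivity),
      ← ENNReal.ofReal_mul' (by positivity)]
    congr 1
    field_simp
    ring
  · rw [indicator_of_notMem (mt mem_closedBall_zero_iff.1 hy),
      indicator_of_notMem (mt mem_Ici.1 hy), mul_zero]

theorem lintegral_uniformCubePDF_gammaMeasure {r : ℝ} (hr : 0 < r) (y : ι → ℝ) :
    ∫⁻ t, uniformCubePDF ι t y ∂gammaMeasure (Fintype.card ι + 1) r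
      = ENNReal.ofReal (r ^ Fintype.card ι / ((Fintype.card ι).factorial * 2 ^ Fintype.card ι))
          * ENNReal.ofReal (Real.exp (-r * ‖y‖)) := by
  set n := Fintype.card ι
  have hK : 0 ≤ r ^ (n + 1) / (n.factorial * 2 ^ n) := by positivity
  rw [gammaMeasure, lintegral_withDensity_eq_lintegral_mul _ (measurable_gammaPDF _ _)
    measurable_uniformCubePDF.of_uncurry_right]
  calc ∫⁻ t, (gammaPDF (n + 1) r * fun t => uniformCubePDF ι t y) t
      = ∫⁻ t, (Ici ‖y‖).indicator
          (fun t => ENNReal.ofReal (r ^ (n + 1) / (n.factorial * 2 ^ n) * Real.exp (-r * t))) t :=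
        lintegral_congr_ae ((Measure.ae_ne volume 0).mono fun t ht =>
          gammaPDF_mul_uniformCubePDF r ht y)
    _ = ENNReal.ofReal (r ^ (n + 1) / (n.factorial * 2 ^ n))
          * ∫⁻ t in Ioi ‖y‖, ENNReal.ofReal (Real.exp (-r * t)) := by
        rw [lintegral_indicator measurableSet_Ici, ← restrict_Ioi_eq_restrict_Ici]
        simp_rw [ENNReal.ofReal_mul hK]
        exact lintegral_const_mul _ (by fun_prop)
    _ = _ := by
        rw [lintegral_Ioi_exp_neg_mul hr, ← ENNReal.ofReal_mul hK,
          ← ENNReal.ofReal_mul' (by positivity)]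
        congr 1
        field_simp
        ring

end Cube

theorem gamma_uniform_mixture_general (d : ℕ) (ε Δ : ℝ) (hε : 0 < ε) (hΔ : 0 < Δ) :
    let ν : Measure (Fin d → ℝ) :=
      volume.withDensity (fun y => ENNReal.ofReal (Real.exp (-(ε / Δ) * ‖y‖)))
    let μ : Measure (Fin d → ℝ) := (ν Set.univ)⁻¹ • ν
    Measure.bind (gammaMeasure (d + 1) (ε / Δ))
      (fun r => (volume {y : Fin d → ℝ | ∀ j, |y j| ≤ r})⁻¹ •
        volume.restrict {y : Fin d → ℝ | ∀ j, |y j| ≤ r}) = μ := by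
  intro ν μ
  change (gammaMeasure (d + 1) (ε / Δ)).bind (fun r => volume[|{y : Fin d → ℝ | ∀ j, |y j| ≤ r}])
    = μ
  have hr : 0 < ε / Δ := div_pos hε hΔ
  have := isProbabilityMeasure_gammaMeasure (a := d + 1) (by positivity) hr
  have := isProbabilityMeasure_bind_cond_setOf_forall_abs_le (ι := Fin d)
    (gammaMeasure (d + 1) (ε / Δ)) (ae_pos_gammaMeasure _ _)
  have hdensity := lintegral_uniformCubePDF_gammaMeasure (ι := Fin d) hr
  simp only [Fintype.card_fin] at hdensity
  refine Measure.eq_inv_measure_univ_smul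
    (c := ENNReal.ofReal ((ε / Δ) ^ d / (d.factorial * 2 ^ d))) ?_
  rw [bind_cond_setOf_forall_abs_le]
  simp_rw [hdensity]
  exact withDensity_smul _ (by fun_prop)

/-- Sampling `R` from a gamma distribution with shape `d+1` and rate `ε/Δ` and
then sampling `Y` uniformly from the cube `[-R, R]^d` yields the distribution
on `ℝ^d` with density proportional to `exp(-(ε/Δ)‖y‖_∞)`.
Here `Fin d → ℝ` carries the sup norm. -/
theorem gamma_uniform_mixture (d : ℕ) (hd : 1 ≤ d) (ε Δ : ℝ) (hε : 0 < ε) (hΔ : 0 < Δ) :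
    let ν : Measure (Fin d → ℝ) :=
      volume.withDensity (fun y => ENNReal.ofReal (Real.exp (-(ε / Δ) * ‖y‖)))
    let μ : Measure (Fin d → ℝ) := (ν Set.univ)⁻¹ • ν
    Measure.bind (gammaMeasure (d + 1) (ε / Δ))
      (fun r => (volume {y : Fin d → ℝ | ∀ j, |y j| ≤ r})⁻¹ •
        volume.restrict {y : Fin d → ℝ | ∀ j, |y j| ≤ r}) = μ :=
  gamma_uniform_mixture_general d ε Δ hε hΔ
end
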